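/- Let n ≥ 3 and k ≥ 1 be integers and define, for 0 < ε < 1, A(ε) = ε − ε^{2k+n−1}, B(ε) = −((k+n−2)ε^{2k+n−1} + kε^{2k+n−2} + kε + (k+n−2)), C(ε) = k(k+n−2)(1 − ε^{2k+n−2}). Then there exist ε₀ ∈ (0,1) and M > 0 such that for all ε ∈ (0, ε₀), the larger root σ₊(ε) := (−B(ε) + √(B(ε)² − 4A(ε)C(ε)))/(2A(ε)) satisfies 0 < σ₊(ε) ≤ M/ε. -/
import Mathlib


/-- Coefficient `A(ε)` of the annulus Steklov quadratic. -/
def annA (n k : ℕ) (ε : ℝ) : ℝ := ε - ε ^ (2 * k + n - 1)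

/-- Coefficient `B(ε)` of the annulus Steklov quadratic. -/
def annB (n k : ℕ) (ε : ℝ) : ℝ :=
  -(((k : ℝ) + n - 2) * ε ^ (2 * k + n - 1) + (k : ℝ) * ε ^ (2 * k + n - 2)
      + (k : ℝ) * ε + ((k : ℝ) + n - 2))

/-- Coefficient `C(ε)` of the annulus Steklov quadratic. -/
def annC (n k : ℕ) (ε : ℝ) : ℝ := (k : ℝ) * ((k : ℝ) + n - 2) * (1 - ε ^ (2 * k + n - 2))

/-- The larger root `σ₊(ε)` of the quadratic `A(ε)σ² + B(ε)σ + C(ε) = 0`. -/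
noncomputable def sigPlus (n k : ℕ) (ε : ℝ) : ℝ :=
  (-(annB n k ε) + Real.sqrt ((annB n k ε) ^ 2 - 4 * annA n k ε * annC n k ε)) /
    (2 * annA n k ε)

/-- The larger root is positive and `O(ε⁻¹)` as `ε → 0`. -/
theorem stmt6 {n k : ℕ} (hn : 3 ≤ n) (hk : 1 ≤ k) :
    ∃ ε₀ ∈ Set.Ioo (0 : ℝ) 1, ∃ M > (0 : ℝ), ∀ ε ∈ Set.Ioo (0 : ℝ) ε₀,
      0 < sigPlus n k ε ∧ sigPlus n k ε ≤ M / ε := by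
  have hk1 : (1:ℝ) ≤ k := by exact_mod_cast hk
  have hn3 : (3:ℝ) ≤ n := by exact_mod_cast hn
  refine ⟨1/2, by norm_num, 8*(k:ℝ)+4*n, by linarith, ?_⟩
  intro ε hε
  obtain ⟨hε0, hε2⟩ := hε
  have hε1 : ε < 1 := by linarith
  have e1 : 2*k+n-1 = (2*k+n-2)+1 := by omega
  have hεm1 : ε ^ (2*k+n-2) ≤ 1 := pow_le_one₀ hε0.le hε1.le
  have hεm : ε ^ (2*k+n-2) ≤ ε := pow_le_of_le_one hε0.le hε1.le (by omega)
  have hεmlt : ε ^ (2*k+n-2) < 1 := pow_lt_one₀ hε0.le hε1 (by omega)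
  have hεmnn : 0 ≤ ε ^ (2*k+n-2) := pow_nonneg hε0.le _
  have hA : annA n k ε = ε - ε ^ (2*k+n-2) * ε := by
    simp only [annA, e1, pow_succ]
  have hApos : 0 < annA n k ε := by rw [hA]; nlinarith
  have hA2 : ε/2 ≤ annA n k ε := by rw [hA]; nlinarith
  have hBval : -(annB n k ε) = ((k:ℝ)+n-2) * (ε ^ (2*k+n-2) * ε)
      + k * ε ^ (2*k+n-2) + k * ε + ((k:ℝ)+n-2) := by
    simp only [annB, e1, pow_succ]; ring
  have hq : (0:ℝ) ≤ (k:ℝ)+n-2 := by linarith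
  have hBpos : 0 < -(annB n k ε) := by
    rw [hBval]
    nlinarith [mul_nonneg (mul_nonneg hq hεmnn) hε0.le, mul_nonneg hq hεmnn,
      mul_nonneg (by linarith : (0:ℝ) ≤ (k:ℝ)) hεmnn,
      mul_nonneg (by linarith : (0:ℝ) ≤ (k:ℝ)) hε0.le]
  have hBle : -(annB n k ε) ≤ 4*(k:ℝ) + 2*n := by rw [hBval]; nlinarith
  have hCpos : 0 ≤ annC n k ε := by
    simp only [annC]
    have := mul_nonneg (mul_nonneg (by linarith : (0:ℝ) ≤ (k:ℝ)) hq)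
      (by linarith : (0:ℝ) ≤ 1 - ε ^ (2*k+n-2))
    linarith
  have hD : (annB n k ε)^2 - 4*annA n k ε * annC n k ε ≤ (annB n k ε)^2 := by nlinarith
  have hsnn : 0 ≤ Real.sqrt ((annB n k ε)^2 - 4*annA n k ε * annC n k ε) :=
    Real.sqrt_nonneg _
  have hsqrt : Real.sqrt ((annB n k ε)^2 - 4*annA n k ε * annC n k ε) ≤ -(annB n k ε) := by
    calc Real.sqrt ((annB n k ε)^2 - 4*annA n k ε * annC n k ε)
        ≤ Real.sqrt ((annB n k ε)^2) := Real.sqrt_le_sqrt hD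
      _ = |annB n k ε| := Real.sqrt_sq_eq_abs _
      _ = -(annB n k ε) := abs_of_neg (by linarith)
  constructor
  · apply div_pos (by linarith) (by linarith)
  · rw [sigPlus, div_le_div_iff₀ (by linarith) hε0]
    nlinarith [mul_le_mul_of_nonneg_right hBle hε0.le,
      mul_le_mul_of_nonneg_left hA2 (by linarith : (0:ℝ) ≤ 8*(k:ℝ)+4*n)]
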